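/- arXiv:1903.00255 — 2 statements merged into one kernel-verified Lean document; each statement's English description precedes it below -/
import Mathlib

section
/- If an irrational number ω ∈ (0,1) satisfies e^{(κ−T₋)n} ≤ M_n(ω) ≤ e^{(κ+T₊)n} for all n ≥ N, for some T₋, T₊ > 0 and N ∈ ℕ, then there exists C > 0 such that ω is (C,τ)-Diophantine with τ = 1 + (T₊ + T₋)/log φ, where φ = (1+√5)/2 is the golden ratio. -/
open Set

noncomputable section

/-- The Gauss map `G(x) = 1/x - ⌊1/x⌋`. -/
def gaussMap (x : ℝ) : ℝ := 1 / x - (⌊1 / x⌋ : ℝ)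

/-- The `n`-th partial quotient `a_n(ω) = ⌊1 / G^{n-1}(ω)⌋` (for `n ≥ 1`). -/
def pq (ω : ℝ) (n : ℕ) : ℤ := ⌊1 / (gaussMap^[n - 1] ω)⌋

/-- `M_n(ω) = a_1(ω) ⋯ a_n(ω)`. -/
def Mprod (ω : ℝ) (n : ℕ) : ℝ := ∏ j ∈ Finset.Icc 1 n, (pq ω j : ℝ)

/-- Khintchine's constant exponent `κ`. -/
def kappa : ℝ := ∫ x in Ioo (0 : ℝ) 1, Real.log (⌊1 / x⌋ : ℝ) / ((1 + x) * Real.log 2)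

/-- `ω` is `(C,τ)`-Diophantine: `|qω − p| ≥ C/q^τ` for all integers `p` and positive integers
`q`. -/
def IsDiophantine (C τ ω : ℝ) : Prop :=
  ∀ p q : ℤ, 0 < q → C / (q : ℝ) ^ τ ≤ |(q : ℝ) * ω - (p : ℝ)|

end


/-!
The two-sided bound on `M_n` forces `a_{n+1} = M_{n+1} / M_n ≤ K e^{(T₊+T₋) n}`, while the
convergent denominators grow at least like `q_n ≥ φ^{n-1}`; hence `a_{n+1} + 2 ≲ q_n^{τ-1}`.
By Legendre's theorem a fraction `p/q` with `|ω - p/q| < 1/(2q²)` is a convergent `p_n/q_n` with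
`q_n ≤ q`, and `|ω - p_n/q_n| ≥ 1/((a_{n+1} + 2) q_n²)`; every other fraction satisfies
`|qω - p| ≥ 1/(2q)`.
-/

open Set Real GenContFract
open scoped goldenRatio

lemma gaussMap_eq_fract_inv (x : ℝ) : gaussMap x = Int.fract x⁻¹ := by
  rw [gaussMap, Int.fract, one_div]

lemma irrational_gaussMap {x : ℝ} (hx : Irrational x) : Irrational (gaussMap x) := by
  rw [gaussMap_eq_fract_inv, Int.fract]
  exact hx.inv.sub_intCast _

lemma gaussMap_mem_Ioo {x : ℝ} (hx : Irrational x) : gaussMap x ∈ Ioo (0 : ℝ) 1 := by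
  rw [gaussMap_eq_fract_inv]
  exact ⟨Int.fract_pos.mpr (hx.inv.ne_int _), Int.fract_lt_one _⟩

section GaussIterate

variable {ω : ℝ}

lemma irrational_gaussMap_iterate (hω : Irrational ω) (n : ℕ) : Irrational (gaussMap^[n] ω) := by
  induction n with
  | zero => exact hω
  | succ k ih => rw [Function.iterate_succ_apply']; exact irrational_gaussMap ih

lemma gaussMap_iterate_mem_Ioo (hω : Irrational ω) (hmem : ω ∈ Ioo (0 : ℝ) 1) (n : ℕ) :
    gaussMap^[n] ω ∈ Ioo (0 : ℝ) 1 := by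
  cases n with
  | zero => exact hmem
  | succ k =>
    rw [Function.iterate_succ_apply']
    exact gaussMap_mem_Ioo (irrational_gaussMap_iterate hω k)

lemma one_le_pq (hω : Irrational ω) (hmem : ω ∈ Ioo (0 : ℝ) 1) (n : ℕ) : 1 ≤ pq ω (n + 1) := by
  obtain ⟨h0, h1⟩ := gaussMap_iterate_mem_Ioo hω hmem n
  exact Int.le_floor.mpr (by simpa using one_le_one_div h0 h1.le)

lemma intFractPair_stream_eq (hω : Irrational ω) (hmem : ω ∈ Ioo (0 : ℝ) 1) (n : ℕ) :
    IntFractPair.stream ω n = some ⟨if n = 0 then 0 else pq ω n, gaussMap^[n] ω⟩ := by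
  induction n with
  | zero =>
    have hfloor : ⌊ω⌋ = 0 := Int.floor_eq_zero_iff.mpr ⟨hmem.1.le, hmem.2⟩
    simp [IntFractPair.stream_zero, IntFractPair.of, Int.fract, hfloor]
  | succ k ih =>
    have hfr : gaussMap^[k] ω ≠ 0 := (gaussMap_iterate_mem_Ioo hω hmem k).1.ne'
    rw [IntFractPair.stream_succ_of_some ih hfr, Function.iterate_succ_apply',
      gaussMap_eq_fract_inv]
    simp [IntFractPair.of, pq, one_div]

end GaussIterate

/-- The continuant pairs `(p, q)` of `[0; a 1, a 2, …]` over `ℤ`, indexed like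
`GenContFract.contsAux`, so that entry `n + 1` gives the `n`-th convergent. -/
def intContsAux (a : ℕ → ℤ) : ℕ → ℤ × ℤ
  | 0 => (1, 0)
  | 1 => (0, 1)
  | n + 2 => (a (n + 1) * (intContsAux a (n + 1)).1 + (intContsAux a n).1,
              a (n + 1) * (intContsAux a (n + 1)).2 + (intContsAux a n).2)

section IntContsAux

variable (a : ℕ → ℤ)

lemma intContsAux_det (n : ℕ) :
    (intContsAux a n).1 * (intContsAux a (n + 1)).2
      - (intContsAux a (n + 1)).1 * (intContsAux a n).2 = (-1) ^ n := by
  induction n with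
  | zero => simp [intContsAux]
  | succ k ih =>
    simp only [intContsAux]
    linear_combination (-1 : ℤ) * ih

lemma isCoprime_intContsAux : ∀ n, IsCoprime (intContsAux a n).1 (intContsAux a n).2
  | 0 => isCoprime_one_left
  | n + 1 => by
    have hsq : ((-1 : ℤ) ^ n) ^ 2 = 1 := by rw [← pow_mul, pow_mul', neg_one_sq, one_pow]
    refine ⟨-(-1) ^ n * (intContsAux a n).2, (-1) ^ n * (intContsAux a n).1, ?_⟩
    linear_combination (-1 : ℤ) ^ n * intContsAux_det a n + hsq

variable {a}

lemma intContsAux_snd_mono (ha : ∀ n, 1 ≤ a (n + 1)) : Monotone fun n => (intContsAux a n).2 := by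
  have hstep : ∀ n, 0 ≤ (intContsAux a n).2 ∧ (intContsAux a n).2 ≤ (intContsAux a (n + 1)).2 := by
    intro n
    induction n with
    | zero => simp [intContsAux]
    | succ k ih =>
      have := ha k
      refine ⟨by linarith, ?_⟩
      show _ ≤ a (k + 1) * (intContsAux a (k + 1)).2 + (intContsAux a k).2
      nlinarith
  exact monotone_nat_of_le_succ fun n => (hstep n).2

lemma intContsAux_snd_nonneg (ha : ∀ n, 1 ≤ a (n + 1)) (n : ℕ) : 0 ≤ (intContsAux a n).2 :=
  intContsAux_snd_mono ha n.zero_le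

lemma one_le_intContsAux_snd (ha : ∀ n, 1 ≤ a (n + 1)) (n : ℕ) : 1 ≤ (intContsAux a (n + 1)).2 :=
  intContsAux_snd_mono ha (Nat.le_add_left 1 n)

lemma goldenRatio_pow_le_mul_intContsAux_snd (ha : ∀ n, 1 ≤ a (n + 1)) (n : ℕ) :
    φ ^ n ≤ φ * (intContsAux a (n + 1)).2 := by
  induction n using Nat.twoStepInduction with
  | zero => simpa [intContsAux] using one_lt_goldenRatio.le
  | one =>
    have : (1 : ℝ) ≤ a 1 := by exact_mod_cast ha 0
    simpa [intContsAux] using le_mul_of_one_le_right goldenRatio_pos.le this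
  | more n ih₀ ih₁ =>
    have hq : (intContsAux a (n + 2)).2 + (intContsAux a (n + 1)).2
        ≤ (intContsAux a (n + 3)).2 := by
      have h₁ := ha (n + 1)
      have h₂ := intContsAux_snd_nonneg ha (n + 2)
      show _ ≤ a (n + 2) * (intContsAux a (n + 2)).2 + (intContsAux a (n + 1)).2
      nlinarith
    have hq' : ((intContsAux a (n + 2)).2 : ℝ) + (intContsAux a (n + 1)).2
        ≤ (intContsAux a (n + 3)).2 := by exact_mod_cast hq
    calc φ ^ (n + 2) = φ ^ (n + 1) + φ ^ n := by
          linarith [goldenRatio_pow_sub_goldenRatio_pow n]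
      _ ≤ φ * (intContsAux a (n + 2)).2 + φ * (intContsAux a (n + 1)).2 := add_le_add ih₁ ih₀
      _ ≤ φ * (intContsAux a (n + 3)).2 := by
          rw [← mul_add]; exact mul_le_mul_of_nonneg_left hq' goldenRatio_pos.le

end IntContsAux

section ContinuedFraction

variable {ω : ℝ}

lemma of_s_get?_eq (hω : Irrational ω) (hmem : ω ∈ Ioo (0 : ℝ) 1) (n : ℕ) :
    (GenContFract.of ω).s.get? n = some ⟨1, (pq ω (n + 1) : ℝ)⟩ := by
  simpa using get?_of_eq_some_of_succ_get?_intFractPair_stream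
    (intFractPair_stream_eq hω hmem (n + 1))

lemma contsAux_of_eq (hω : Irrational ω) (hmem : ω ∈ Ioo (0 : ℝ) 1) (n : ℕ) :
    (GenContFract.of ω).contsAux n =
      ⟨((intContsAux (pq ω) n).1 : ℝ), ((intContsAux (pq ω) n).2 : ℝ)⟩ := by
  induction n using Nat.twoStepInduction with
  | zero => simp [zeroth_contAux_eq_one_zero, intContsAux]
  | one =>
    have hfloor : ⌊ω⌋ = 0 := Int.floor_eq_zero_iff.mpr ⟨hmem.1.le, hmem.2⟩
    simp [first_contAux_eq_h_one, of_h_eq_floor, hfloor, intContsAux]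
  | more n ih₀ ih₁ =>
    rw [contsAux_recurrence (of_s_get?_eq hω hmem n) ih₀ ih₁]
    simp only [intContsAux]
    push_cast
    congr 1 <;> ring

lemma one_div_le_abs_sub_convs (hω : Irrational ω) (hmem : ω ∈ Ioo (0 : ℝ) 1) (n : ℕ) :
    1 / (((pq ω (n + 1) : ℝ) + 2) * ((intContsAux (pq ω) (n + 1)).2 : ℝ) ^ 2)
      ≤ |ω - (GenContFract.of ω).convs n| := by
  -- `ω - p_n/q_n = ±1 / (q_n (x q_n + q_{n-1}))` with `x = 1/Gⁿω < a_{n+1} + 1`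
  have hsub := sub_convs_eq (intFractPair_stream_eq hω hmem n)
  obtain ⟨hf₀, -⟩ := gaussMap_iterate_mem_Ioo hω hmem n
  simp only [hf₀.ne', if_false, contsAux_of_eq hω hmem] at hsub
  have ha := one_le_pq hω hmem
  have hq₁ : (1 : ℝ) ≤ (intContsAux (pq ω) (n + 1)).2 := by
    exact_mod_cast one_le_intContsAux_snd ha n
  have hq₀ : (0 : ℝ) ≤ (intContsAux (pq ω) n).2 := by
    exact_mod_cast intContsAux_snd_nonneg ha n
  have hqq : ((intContsAux (pq ω) n).2 : ℝ) ≤ (intContsAux (pq ω) (n + 1)).2 := by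
    exact_mod_cast intContsAux_snd_mono ha n.le_succ
  have hinv : (gaussMap^[n] ω)⁻¹ < pq ω (n + 1) + 1 := by
    have : pq ω (n + 1) = ⌊(gaussMap^[n] ω)⁻¹⌋ := by simp [pq, one_div]
    rw [this]
    exact Int.lt_floor_add_one _
  rw [hsub, abs_div, abs_neg_one_pow, abs_of_pos (by positivity)]
  apply one_div_le_one_div_of_le (by positivity)
  nlinarith [inv_pos.mpr hf₀]

lemma exists_convs_eq_div_and_le_of_abs_sub_lt (hω : Irrational ω) (hmem : ω ∈ Ioo (0 : ℝ) 1)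
    {p q : ℤ} (hq : 0 < q) (h : |ω - p / q| < 1 / (2 * (q : ℝ) ^ 2)) :
    ∃ n, (GenContFract.of ω).convs n = p / q ∧ (intContsAux (pq ω) (n + 1)).2 ≤ q := by
  set r : ℚ := p / q
  have hr : (r : ℝ) = p / q := by push_cast [r]; rfl
  have hden : (r.den : ℤ) ≤ q :=
    Int.le_of_dvd hq (by simpa [Rat.divInt_eq_div] using Rat.den_dvd p q)
  have hlegendre : |ω - r| < 1 / (2 * (r.den : ℝ) ^ 2) := by
    have : (r.den : ℝ) ≤ q := by exact_mod_cast hden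
    rw [hr]
    refine h.trans_le (one_div_le_one_div_of_le (by positivity) ?_)
    gcongr
  obtain ⟨n, hn⟩ := exists_convs_eq_rat hlegendre
  refine ⟨n, hn.trans hr, ?_⟩
  have hQ : 0 < (intContsAux (pq ω) (n + 1)).2 := one_le_intContsAux_snd (one_le_pq hω hmem) n
  have hrPQ : r = (intContsAux (pq ω) (n + 1)).1 / (intContsAux (pq ω) (n + 1)).2 := by
    suffices (r : ℝ) = (intContsAux (pq ω) (n + 1)).1 / (intContsAux (pq ω) (n + 1)).2 by
      exact_mod_cast this
    rw [← hn, conv_eq_conts_a_div_conts_b, nth_cont_eq_succ_nth_contAux, contsAux_of_eq hω hmem]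
  have hrQ : (r.den : ℤ) = (intContsAux (pq ω) (n + 1)).2 := by
    rw [hrPQ]
    exact Rat.den_div_eq_of_coprime hQ
      (Int.isCoprime_iff_gcd_eq_one.mp (isCoprime_intContsAux _ _))
  exact hrQ ▸ hden

end ContinuedFraction

lemma exp_mul_natCast_eq_pow_rpow {x : ℝ} (hx₀ : 0 < x) (hx₁ : x ≠ 1) (T : ℝ) (n : ℕ) :
    exp (T * n) = (x ^ n) ^ (T / log x) := by
  have hlog : log x ≠ 0 := log_ne_zero_of_pos_of_ne_one hx₀ hx₁
  rw [rpow_def_of_pos (pow_pos hx₀ n), log_pow]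
  field_simp

lemma abs_mul_sub_eq_mul_abs_sub {q : ℝ} (hq : 0 < q) (ω p : ℝ) :
    |q * ω - p| = q * |ω - p / q| := by
  rw [← abs_of_pos hq, ← abs_mul, abs_of_pos hq, mul_sub, mul_div_cancel₀ _ hq.ne']

lemma isDiophantine_min_of_forall_abs_sub_lt {C τ ω : ℝ} (hτ : 1 ≤ τ)
    (h : ∀ p q : ℤ, 0 < q → |ω - p / q| < 1 / (2 * (q : ℝ) ^ 2) →
      C / (q : ℝ) ^ τ ≤ |q * ω - p|) :
    IsDiophantine (min (1 / 2) C) τ ω := by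
  intro p q hq
  by_cases hnear : |ω - p / q| < 1 / (2 * (q : ℝ) ^ 2)
  · exact (div_le_div_of_nonneg_right (min_le_right _ _) (by positivity)).trans (h p q hq hnear)
  · have hq₁ : (1 : ℝ) ≤ q := by exact_mod_cast hq
    have hq₀ : (0 : ℝ) < q := zero_lt_one.trans_le hq₁
    calc min (1 / 2) C / (q : ℝ) ^ τ ≤ 1 / 2 / (q : ℝ) ^ τ := by gcongr; exact min_le_left _ _
      _ ≤ 1 / 2 / q := by
          gcongr
          simpa using rpow_le_rpow_of_exponent_le hq₁ hτ
      _ = q * (1 / (2 * (q : ℝ) ^ 2)) := by field_simp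
      _ ≤ q * |ω - p / q| := by gcongr; exact not_lt.mp hnear
      _ = |q * ω - p| := (abs_mul_sub_eq_mul_abs_sub hq₀ _ _).symm

lemma exists_forall_le_mul_of_forall_ge {f g : ℕ → ℝ} {c : ℝ} {N : ℕ} (hg : ∀ n, 1 ≤ g n)
    (h : ∀ n, N ≤ n → f n ≤ c * g n) : ∃ K, ∀ n, f n ≤ K * g n := by
  set S := ∑ m ∈ Finset.range N, |f m|
  have hS : 0 ≤ S := Finset.sum_nonneg fun _ _ => abs_nonneg _
  refine ⟨max c S, fun n => ?_⟩
  rcases le_or_gt N n with hn | hn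
  · exact (h n hn).trans (mul_le_mul_of_nonneg_right (le_max_left _ _) (zero_le_one.trans (hg n)))
  · calc f n ≤ |f n| := le_abs_self _
      _ ≤ S := Finset.single_le_sum (fun m _ => abs_nonneg (f m)) (Finset.mem_range.mpr hn)
      _ ≤ max c S := le_max_right _ _
      _ ≤ max c S * g n := le_mul_of_one_le_right (hS.trans (le_max_right _ _)) (hg n)

section Diophantine

variable {ω : ℝ}

lemma le_abs_mul_sub_of_abs_sub_lt (hω : Irrational ω) (hmem : ω ∈ Ioo (0 : ℝ) 1)
    {T K : ℝ} (hT : 0 ≤ T) (hK : 0 < K)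
    (hgrowth : ∀ n : ℕ, (pq ω (n + 1) : ℝ) + 2 ≤ K * exp (T * n))
    {p q : ℤ} (hq : 0 < q) (h : |ω - p / q| < 1 / (2 * (q : ℝ) ^ 2)) :
    (K * φ ^ (T / log φ))⁻¹ / (q : ℝ) ^ (1 + T / log φ) ≤ |q * ω - p| := by
  set σ := T / log φ
  have hσ : 0 ≤ σ := div_nonneg hT (log_pos one_lt_goldenRatio).le
  have hq₀ : (0 : ℝ) < q := by exact_mod_cast hq
  obtain ⟨n, hconv, hQq⟩ := exists_convs_eq_div_and_le_of_abs_sub_lt hω hmem hq h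
  have ha := one_le_pq hω hmem
  have ha₁ : (1 : ℝ) ≤ pq ω (n + 1) := by exact_mod_cast ha n
  have hQ₁ : (1 : ℝ) ≤ (intContsAux (pq ω) (n + 1)).2 := by
    exact_mod_cast one_le_intContsAux_snd ha n
  have hQq' : ((intContsAux (pq ω) (n + 1)).2 : ℝ) ≤ q := by exact_mod_cast hQq
  have hpq : (pq ω (n + 1) : ℝ) + 2 ≤ K * φ ^ σ * (q : ℝ) ^ σ := calc
    _ ≤ K * exp (T * n) := hgrowth n
    _ = K * (φ ^ n) ^ σ := by
        rw [exp_mul_natCast_eq_pow_rpow goldenRatio_pos one_lt_goldenRatio.ne']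
    _ ≤ K * (φ * q) ^ σ := by
        gcongr
        exact (goldenRatio_pow_le_mul_intContsAux_snd ha n).trans (by gcongr)
    _ = K * φ ^ σ * (q : ℝ) ^ σ := by rw [mul_rpow goldenRatio_pos.le hq₀.le, mul_assoc]
  have herr := one_div_le_abs_sub_convs hω hmem n
  rw [hconv] at herr
  calc (K * φ ^ σ)⁻¹ / (q : ℝ) ^ (1 + σ)
      = q * (1 / (K * φ ^ σ * (q : ℝ) ^ σ * (q : ℝ) ^ 2)) := by
        rw [rpow_add hq₀, rpow_one]
        field_simp
    _ ≤ q * (1 / (((pq ω (n + 1) : ℝ) + 2) * ((intContsAux (pq ω) (n + 1)).2 : ℝ) ^ 2)) := by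
        have : (0 : ℝ) < pq ω (n + 1) + 2 := by linarith
        gcongr
    _ ≤ q * |ω - p / q| := by gcongr
    _ = |q * ω - p| := (abs_mul_sub_eq_mul_abs_sub hq₀ _ _).symm

theorem exists_isDiophantine_of_pq_le (hω : Irrational ω) (hmem : ω ∈ Ioo (0 : ℝ) 1)
    {T K : ℝ} (hT : 0 ≤ T) (hgrowth : ∀ n : ℕ, (pq ω (n + 1) : ℝ) + 2 ≤ K * exp (T * n)) :
    ∃ C, 0 < C ∧ IsDiophantine C (1 + T / log φ) ω := by
  have hK : 0 < K := by
    have h₀ := hgrowth 0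
    have h₁ : (1 : ℝ) ≤ pq ω 1 := by exact_mod_cast one_le_pq hω hmem 0
    simp only [Nat.cast_zero, mul_zero, exp_zero, mul_one, zero_add] at h₀
    linarith
  have hσ : 0 ≤ T / log φ := div_nonneg hT (log_pos one_lt_goldenRatio).le
  refine ⟨min (1 / 2) (K * φ ^ (T / log φ))⁻¹, by positivity, ?_⟩
  exact isDiophantine_min_of_forall_abs_sub_lt (le_add_of_nonneg_right hσ)
    fun p q hq h => le_abs_mul_sub_of_abs_sub_lt hω hmem hT hK hgrowth hq h

end Diophantine

lemma Mprod_succ (ω : ℝ) (n : ℕ) : Mprod ω (n + 1) = Mprod ω n * pq ω (n + 1) :=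
  Finset.prod_Icc_succ_top (by omega) _

lemma pq_add_two_le_of_exp_le_Mprod {ω : ℝ} (hω : Irrational ω) (hmem : ω ∈ Ioo (0 : ℝ) 1)
    {L U : ℝ} (hLU : L ≤ U) {n : ℕ} (hlow : exp (L * n) ≤ Mprod ω n)
    (hup : Mprod ω (n + 1) ≤ exp (U * (n + 1 : ℕ))) :
    (pq ω (n + 1) : ℝ) + 2 ≤ (exp U + 2) * exp ((U - L) * n) := by
  have ha : (1 : ℝ) ≤ pq ω (n + 1) := by exact_mod_cast one_le_pq hω hmem n
  have hprod : (pq ω (n + 1) : ℝ) * exp (L * n) ≤ exp U * exp ((U - L) * n) * exp (L * n) :=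
    calc (pq ω (n + 1) : ℝ) * exp (L * n) ≤ pq ω (n + 1) * Mprod ω n := by gcongr
      _ = Mprod ω (n + 1) := by rw [Mprod_succ, mul_comm]
      _ ≤ exp (U * (n + 1 : ℕ)) := hup
      _ = exp U * exp ((U - L) * n) * exp (L * n) := by
          rw [← exp_add, ← exp_add]; push_cast; ring_nf
  have hpq := le_of_mul_le_mul_right hprod (exp_pos _)
  have hexp : 1 ≤ exp ((U - L) * n) := one_le_exp (by have := sub_nonneg.mpr hLU; positivity)
  nlinarith

theorem KL_two_sided_imp_diophantine (ω Tminus Tplus : ℝ) (N : ℕ) (hω : Irrational ω)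
    (hmem : ω ∈ Ioo (0 : ℝ) 1) (hTm : 0 < Tminus) (hTp : 0 < Tplus)
    (hKL : ∀ n : ℕ, N ≤ n →
      Real.exp ((kappa - Tminus) * n) ≤ Mprod ω n ∧ Mprod ω n ≤ Real.exp ((kappa + Tplus) * n)) :
    ∃ C : ℝ, 0 < C ∧
      IsDiophantine C (1 + (Tplus + Tminus) / Real.log ((1 + Real.sqrt 5) / 2)) ω := by
  have hT : 0 ≤ Tplus + Tminus := by positivity
  obtain ⟨K, hK⟩ := exists_forall_le_mul_of_forall_ge
    (f := fun n => (pq ω (n + 1) : ℝ) + 2) (g := fun n => exp ((Tplus + Tminus) * n))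
    (fun n => one_le_exp (by positivity)) fun n hn => by
      have h := pq_add_two_le_of_exp_le_Mprod hω hmem (by linarith) (hKL n hn).1
        (hKL (n + 1) (by omega)).2
      rwa [show kappa + Tplus - (kappa - Tminus) = Tplus + Tminus by ring] at h
  exact exists_isDiophantine_of_pq_le hω hmem hT hK
end

section
/- There exist an irrational number ω ∈ (0,1) and constants C > 0 and τ ≥ 1 such that ω is (C,τ)-Diophantine, and yet for every T > 0 and every N ∈ ℕ there exists n ≥ N with M_n(ω) > e^{(κ+T)n}; in particular ω is Diophantine but belongs to no set KL⁺(T,N) and to no set KL'⁺(T,N). -/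
open Set

noncomputable section

/-- `M'_n(ω) = (1 + a_1(ω)) ⋯ (1 + a_n(ω))`. -/
def Mprod' (ω : ℝ) (n : ℕ) : ℝ := ∏ j ∈ Finset.Icc 1 n, (1 + (pq ω j : ℝ))

/-- `κ' = ∫₀¹ log(1+⌊1/x⌋)/((1+x) log 2) dx`. -/
def kappa' : ℝ := ∫ x in Ioo (0 : ℝ) 1, Real.log (1 + (⌊1 / x⌋ : ℝ)) / ((1 + x) * Real.log 2)

end

/-! The witness is `ω = [0; 1, 2, 3, …]`, which exists because the closed cylinders of any
prescribed sequence of partial quotients are nested nonempty compacta. Then `M_n(ω) = n!` outgrows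
every `e^{Kn}`, and `M'_n(ω) ≥ M_n(ω)`. The convergent denominators satisfy `q_n ≥ n`, so
`a_{n+1} = n + 1 ≤ 4 q_n - 2`, and by the best-approximation property of convergents
`|qω - p| ≥ |q_n ω - p_n| ≥ 1 / (q_{n+1} + q_n) ≥ 1 / (4 q²)` whenever `q_n ≤ q < q_{n+1}`. -/

lemma one_div_iterate_gaussMap (ω : ℝ) (n : ℕ) :
    1 / gaussMap^[n] ω = pq ω (n + 1) + gaussMap^[n + 1] ω := by
  rw [Function.iterate_succ_apply', gaussMap, pq, Nat.add_sub_cancel]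
  ring

lemma iterate_gaussMap_nonneg {ω : ℝ} (hω : 0 ≤ ω) : ∀ n, 0 ≤ gaussMap^[n] ω
  | 0 => hω
  | n + 1 => by
    rw [Function.iterate_succ_apply', gaussMap, ← Int.fract]
    exact Int.fract_nonneg _

lemma pq_nonneg {ω : ℝ} (hω : 0 ≤ ω) (n : ℕ) : 0 ≤ pq ω n :=
  Int.floor_nonneg.mpr (one_div_nonneg.mpr (iterate_gaussMap_nonneg hω _))

lemma one_le_pq_succ {ω : ℝ} {n : ℕ} (h : gaussMap^[n] ω ∈ Ioo 0 1) : 1 ≤ pq ω (n + 1) := by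
  rw [pq, Nat.add_sub_cancel, Int.le_floor, Int.cast_one, le_div_iff₀ h.1, one_mul]
  exact h.2.le

lemma Mprod_le_Mprod' {ω : ℝ} (hω : 0 ≤ ω) (n : ℕ) : Mprod ω n ≤ Mprod' ω n :=
  Finset.prod_le_prod (fun j _ => by exact_mod_cast pq_nonneg hω j) fun _ _ => by linarith

/-- The closure of the cylinder of points whose first `m` partial quotients are
`a 0, …, a (m - 1)`: the image of `[0, 1]` under
`y ↦ 1 / (a 0 + 1 / (a 1 + ⋯ + 1 / (a (m - 1) + y)))`. -/
def cfCylinder : (ℕ → ℕ) → ℕ → Set ℝ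
  | _, 0 => Icc 0 1
  | a, m + 1 => (fun y => 1 / (a 0 + y)) '' cfCylinder (fun i => a (i + 1)) m

lemma one_div_add_mem_Icc {c : ℕ} (hc : 1 ≤ c) {y : ℝ} (hy : y ∈ Icc (0 : ℝ) 1) :
    1 / (c + y) ∈ Icc (0 : ℝ) 1 := by
  have : (1 : ℝ) ≤ c := by exact_mod_cast hc
  exact ⟨by have := hy.1; positivity, by rw [div_le_one (by linarith [hy.1])]; linarith [hy.1]⟩

lemma one_div_add_mem_Ioc {c : ℕ} (hc : 1 ≤ c) {y : ℝ} (hy : y ∈ Icc (0 : ℝ) 1) :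
    1 / (c + y) ∈ Ioc (0 : ℝ) 1 := by
  have : (1 : ℝ) ≤ c := by exact_mod_cast hc
  exact ⟨by have := hy.1; positivity, (one_div_add_mem_Icc hc hy).2⟩

lemma one_div_add_mem_Ioo {c : ℕ} (hc : 1 ≤ c) {y : ℝ} (hy : y ∈ Ioc (0 : ℝ) 1) :
    1 / (c + y) ∈ Ioo (0 : ℝ) 1 := by
  have : (1 : ℝ) ≤ c := by exact_mod_cast hc
  exact ⟨by have := hy.1; positivity, by rw [div_lt_one (by linarith [hy.1])]; linarith [hy.1]⟩

section Cylinders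

variable {a : ℕ → ℕ}

lemma cfCylinder_subset_Icc (ha : ∀ i, 1 ≤ a i) (m : ℕ) : cfCylinder a m ⊆ Icc 0 1 := by
  induction m generalizing a with
  | zero => exact subset_rfl
  | succ m ih =>
    rintro _ ⟨y, hy, rfl⟩
    exact one_div_add_mem_Icc (ha 0) (ih (fun i => ha (i + 1)) hy)

lemma cfCylinder_succ_subset (ha : ∀ i, 1 ≤ a i) (m : ℕ) :
    cfCylinder a (m + 1) ⊆ cfCylinder a m := by
  induction m generalizing a with
  | zero => exact cfCylinder_subset_Icc ha 1
  | succ m ih => exact image_mono (ih fun i => ha (i + 1))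

lemma isCompact_cfCylinder (ha : ∀ i, 1 ≤ a i) (m : ℕ) : IsCompact (cfCylinder a m) := by
  induction m generalizing a with
  | zero => exact isCompact_Icc
  | succ m ih =>
    refine (ih fun i => ha (i + 1)).image_of_continuousOn (ContinuousOn.mono ?_
      (cfCylinder_subset_Icc (fun i => ha (i + 1)) m))
    refine continuousOn_const.div (by fun_prop) fun y hy => ?_
    have : (1 : ℝ) ≤ a 0 := by exact_mod_cast ha 0
    linarith [hy.1]

lemma cfCylinder_nonempty (m : ℕ) : (cfCylinder a m).Nonempty := by
  induction m generalizing a with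
  | zero => exact nonempty_Icc.mpr zero_le_one
  | succ m ih => exact ih.image _

lemma iInter_cfCylinder_nonempty (ha : ∀ i, 1 ≤ a i) : (⋂ m, cfCylinder a m).Nonempty :=
  isCompact_Icc.nonempty_iInter_of_sequence_nonempty_isCompact_isClosed _
    (cfCylinder_succ_subset ha) cfCylinder_nonempty
    fun m => (isCompact_cfCylinder ha m).isClosed

lemma mem_Ioo_of_mem_iInter_cfCylinder (ha : ∀ i, 1 ≤ a i) {x : ℝ}
    (hx : x ∈ ⋂ m, cfCylinder a m) : x ∈ Ioo 0 1 := by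
  obtain ⟨_, ⟨y, hy, rfl⟩, rfl⟩ := mem_iInter.mp hx 2
  exact one_div_add_mem_Ioo (ha 0) (one_div_add_mem_Ioc (ha 1) hy)

lemma gaussMap_mem_iInter_cfCylinder (ha : ∀ i, 1 ≤ a i) {x : ℝ}
    (hx : x ∈ ⋂ m, cfCylinder a m) :
    ⌊1 / x⌋ = a 0 ∧ gaussMap x ∈ ⋂ m, cfCylinder (fun i => a (i + 1)) m := by
  have hy : 1 / x - a 0 ∈ ⋂ m, cfCylinder (fun i => a (i + 1)) m := by
    refine mem_iInter.mpr fun m => ?_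
    obtain ⟨y, hy, hxy⟩ := mem_iInter.mp hx (m + 1)
    rwa [← hxy, one_div_one_div, add_sub_cancel_left]
  have hfloor : ⌊1 / x⌋ = a 0 := by
    have := mem_Ioo_of_mem_iInter_cfCylinder (fun i => ha (i + 1)) hy
    rw [Int.floor_eq_iff]
    push_cast
    constructor <;> linarith [this.1, this.2]
  refine ⟨hfloor, ?_⟩
  rwa [gaussMap, hfloor, Int.cast_natCast]

theorem exists_pq_eq (ha : ∀ i, 1 ≤ a i) :
    ∃ ω, (∀ n, gaussMap^[n] ω ∈ Ioo 0 1) ∧ ∀ n, pq ω (n + 1) = a n := by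
  obtain ⟨ω, hω⟩ := iInter_cfCylinder_nonempty ha
  have horb : ∀ n, gaussMap^[n] ω ∈ ⋂ m, cfCylinder (fun i => a (i + n)) m := by
    intro n
    induction n with
    | zero => exact hω
    | succ n ih =>
      rw [Function.iterate_succ_apply']
      simpa only [add_assoc, add_comm 1 n] using
        (gaussMap_mem_iInter_cfCylinder (fun i => ha (i + n)) ih).2
  refine ⟨ω, fun n => mem_Ioo_of_mem_iInter_cfCylinder (fun i => ha (i + n)) (horb n),
    fun n => ?_⟩
  rw [pq, Nat.add_sub_cancel, (gaussMap_mem_iInter_cfCylinder (fun i => ha (i + n)) (horb n)).1,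
    zero_add]

end Cylinders

/-- `cfNum a n / cfDen a n` is the `n`-th convergent of `[0; a 1, a 2, …]`; `a 0` is not used. -/
def cfNum (a : ℕ → ℤ) : ℕ → ℤ
  | 0 => 0
  | 1 => 1
  | n + 2 => a (n + 2) * cfNum a (n + 1) + cfNum a n

def cfDen (a : ℕ → ℤ) : ℕ → ℤ
  | 0 => 1
  | 1 => a 1
  | n + 2 => a (n + 2) * cfDen a (n + 1) + cfDen a n

section Convergents

variable {a : ℕ → ℤ}

lemma cfNum_mul_cfDen_sub (a : ℕ → ℤ) (n : ℕ) :
    cfNum a (n + 1) * cfDen a n - cfNum a n * cfDen a (n + 1) = (-1) ^ n := by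
  induction n with
  | zero => simp [cfNum, cfDen]
  | succ n ih =>
    rw [cfNum, cfDen, pow_succ]
    linear_combination (-1 : ℤ) * ih

lemma one_le_cfDen (ha : ∀ n, 1 ≤ a (n + 1)) : ∀ n, 1 ≤ cfDen a n
  | 0 => le_rfl
  | 1 => ha 0
  | n + 2 => by
    have := one_le_cfDen ha n
    have := one_le_cfDen ha (n + 1)
    rw [cfDen]
    nlinarith [ha (n + 1)]

lemma cfDen_le_succ (ha : ∀ n, 1 ≤ a (n + 1)) : ∀ n, cfDen a n ≤ cfDen a (n + 1)
  | 0 => ha 0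
  | n + 1 => by
    have := one_le_cfDen ha n
    have := one_le_cfDen ha (n + 1)
    rw [cfDen]
    nlinarith [ha (n + 1)]

lemma natCast_le_cfDen (ha : ∀ n, 1 ≤ a (n + 1)) : ∀ n : ℕ, (n : ℤ) ≤ cfDen a n
  | 0 => zero_le_one
  | 1 => ha 0
  | n + 2 => by
    have h₁ : ((n + 1 : ℕ) : ℤ) ≤ cfDen a (n + 1) := natCast_le_cfDen ha (n + 1)
    have h₂ : cfDen a (n + 1) ≤ a (n + 2) * cfDen a (n + 1) :=
      le_mul_of_one_le_left (by linarith [one_le_cfDen ha (n + 1)]) (ha (n + 1))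
    rw [cfDen]
    push_cast at h₁ ⊢
    linarith [one_le_cfDen ha n]

lemma cfDen_succ_le (ha : ∀ n, 1 ≤ a (n + 1)) :
    ∀ n, cfDen a (n + 1) ≤ (a (n + 1) + 1) * cfDen a n
  | 0 => by simp [cfDen]
  | n + 1 => by
    have := cfDen_le_succ ha n
    rw [cfDen]
    linarith

end Convergents

lemma exists_le_lt_succ {α : Type*} [LinearOrder α] {f : ℕ → α} {x : α} (h0 : f 0 ≤ x)
    (hx : ∃ m, x < f m) : ∃ n, f n ≤ x ∧ x < f (n + 1) := by
  by_contra! h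
  obtain ⟨m, hm⟩ := hx
  have : ∀ n, f n ≤ x := fun n => Nat.rec h0 (fun n hn => h n hn) n
  exact (this m).not_gt hm

lemma exists_unimodular_coeffs {p₀ q₀ p₁ q₁ p q : ℤ} (hdet : IsUnit (p₁ * q₀ - p₀ * q₁))
    (hq₀ : 0 < q₀) (hq₀q : q₀ ≤ q) (hqq₁ : q < q₁) :
    ∃ x y : ℤ, x ≠ 0 ∧ x * y ≤ 0 ∧ x * p₀ + y * p₁ = p ∧ x * q₀ + y * q₁ = q := by
  have hε := Int.isUnit_mul_self hdet
  obtain ⟨x, y, hp, hq⟩ : ∃ x y : ℤ, x * p₀ + y * p₁ = p ∧ x * q₀ + y * q₁ = q :=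
    ⟨(p₁ * q₀ - p₀ * q₁) * (q * p₁ - p * q₁), (p₁ * q₀ - p₀ * q₁) * (p * q₀ - q * p₀),
      by linear_combination p * hε, by linear_combination q * hε⟩
  refine ⟨x, y, ?_, ?_, hp, hq⟩
  · rintro rfl
    rcases le_or_gt y 0 with hy | hy <;> nlinarith
  · by_contra! hxy
    rcases lt_or_gt_of_ne (left_ne_zero_of_mul hxy.ne') with hx | hx
    · nlinarith [neg_of_mul_pos_right hxy hx.le]
    · nlinarith [pos_of_mul_pos_right hxy hx.le]

noncomputable def cfErr (ω : ℝ) (n : ℕ) : ℝ := cfDen (pq ω) n * ω - cfNum (pq ω) n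

section Errors

variable {ω : ℝ}

lemma cfErr_mul_cfDen_sub (ω : ℝ) (n : ℕ) :
    cfErr ω n * cfDen (pq ω) (n + 1) - cfErr ω (n + 1) * cfDen (pq ω) n = (-1) ^ n := by
  have h := congrArg (Int.cast : ℤ → ℝ) (cfNum_mul_cfDen_sub (pq ω) n)
  push_cast at h
  rw [cfErr, cfErr]
  linear_combination h

lemma cfErr_add_two (ω : ℝ) (n : ℕ) :
    cfErr ω (n + 2) = pq ω (n + 2) * cfErr ω (n + 1) + cfErr ω n := by
  simp only [cfErr, cfDen, cfNum]
  push_cast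
  ring

/-- Equivalently, `cfErr ω n = (-1) ^ n * ω * G ω * ⋯ * G^n ω`. -/
lemma cfErr_succ (h : ∀ n, gaussMap^[n] ω ≠ 0) (n : ℕ) :
    cfErr ω (n + 1) = -gaussMap^[n + 1] ω * cfErr ω n := by
  induction n with
  | zero =>
    have h₁ : (pq ω 1 : ℝ) = 1 / ω - gaussMap^[1] ω := by
      simpa using (sub_eq_of_eq_add (one_div_iterate_gaussMap ω 0)).symm
    simp only [cfErr, cfDen, cfNum, h₁, Int.cast_one, Int.cast_zero]
    have hω : ω ≠ 0 := h 0
    field_simp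
    ring
  | succ n ih =>
    have h₁ := one_div_iterate_gaussMap ω (n + 1)
    have hn := h (n + 1)
    rw [cfErr_add_two, ih]
    field_simp at h₁ ⊢
    linear_combination (cfErr ω n) * h₁

lemma one_le_cfDen_pq (horb : ∀ n, gaussMap^[n] ω ∈ Ioo 0 1) (n : ℕ) : 1 ≤ cfDen (pq ω) n :=
  one_le_cfDen (fun n => one_le_pq_succ (horb n)) n

lemma one_le_abs_cfErr_mul (horb : ∀ n, gaussMap^[n] ω ∈ Ioo 0 1) (n : ℕ) :
    1 ≤ |cfErr ω n| * (cfDen (pq ω) (n + 1) + cfDen (pq ω) n) := by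
  have hdet := cfErr_mul_cfDen_sub ω n
  rw [cfErr_succ (fun n => (horb n).1.ne') n] at hdet
  have hq₀ : (1 : ℝ) ≤ cfDen (pq ω) n := by exact_mod_cast one_le_cfDen_pq horb n
  have hq₁ : (1 : ℝ) ≤ cfDen (pq ω) (n + 1) := by exact_mod_cast one_le_cfDen_pq horb (n + 1)
  have ht := horb (n + 1)
  calc (1 : ℝ) = |cfErr ω n * (cfDen (pq ω) (n + 1) + gaussMap^[n + 1] ω * cfDen (pq ω) n)| := by
        rw [← abs_neg_one_pow n, ← hdet]; ring_nf
    _ = |cfErr ω n| * (cfDen (pq ω) (n + 1) + gaussMap^[n + 1] ω * cfDen (pq ω) n) := by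
        have : 0 < (cfDen (pq ω) (n + 1) : ℝ) + gaussMap^[n + 1] ω * cfDen (pq ω) n := by
          nlinarith [ht.1]
        rw [abs_mul, abs_of_pos this]
    _ ≤ _ := by gcongr; nlinarith [ht.2]

lemma cfErr_mul_cfErr_succ_nonpos (horb : ∀ n, gaussMap^[n] ω ∈ Ioo 0 1) (n : ℕ) :
    cfErr ω n * cfErr ω (n + 1) ≤ 0 := by
  rw [cfErr_succ (fun n => (horb n).1.ne') n]
  nlinarith [(horb (n + 1)).1, mul_self_nonneg (cfErr ω n)]

/-- Best approximation by convergents. -/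
lemma abs_cfErr_le (horb : ∀ n, gaussMap^[n] ω ∈ Ioo 0 1) {n : ℕ} {p q : ℤ}
    (hq₀ : cfDen (pq ω) n ≤ q) (hq₁ : q < cfDen (pq ω) (n + 1)) :
    |cfErr ω n| ≤ |q * ω - p| := by
  have hdet : IsUnit
      (cfNum (pq ω) (n + 1) * cfDen (pq ω) n - cfNum (pq ω) n * cfDen (pq ω) (n + 1)) := by
    rw [cfNum_mul_cfDen_sub]; exact isUnit_neg_one.pow n
  obtain ⟨x, y, hx, hxy, hp, hq⟩ :=
    exists_unimodular_coeffs (p := p) hdet (one_le_cfDen_pq horb n) hq₀ hq₁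
  have hsplit : q * ω - p = x * cfErr ω n + y * cfErr ω (n + 1) := by
    rw [← hp, ← hq, cfErr, cfErr]; push_cast; ring
  have hsign : 0 ≤ (x * cfErr ω n) * (y * cfErr ω (n + 1)) := by
    have : ((x * y : ℤ) : ℝ) ≤ 0 := by exact_mod_cast hxy
    push_cast at this
    nlinarith [cfErr_mul_cfErr_succ_nonpos horb n]
  have hx : (1 : ℝ) ≤ |(x : ℝ)| := by exact_mod_cast Int.one_le_abs hx
  rw [hsplit, (abs_add_eq_add_abs_iff _ _).mpr (mul_nonneg_iff.mp hsign), abs_mul]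
  nlinarith [abs_nonneg (cfErr ω n), abs_nonneg ((y : ℝ) * cfErr ω (n + 1))]

end Errors

theorem isDiophantine_two_of_pq_le {ω K : ℝ} (horb : ∀ n, gaussMap^[n] ω ∈ Ioo 0 1)
    (hK : ∀ n, (pq ω (n + 1) : ℝ) + 2 ≤ K * cfDen (pq ω) n) : IsDiophantine (1 / K) 2 ω := by
  intro p q hq
  have ha : ∀ n, 1 ≤ pq ω (n + 1) := fun n => one_le_pq_succ (horb n)
  obtain ⟨n, hq₀, hq₁⟩ : ∃ n, cfDen (pq ω) n ≤ q ∧ q < cfDen (pq ω) (n + 1) :=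
    exists_le_lt_succ hq ⟨q.toNat + 1, by have := natCast_le_cfDen ha (q.toNat + 1); omega⟩
  have hq₀' : (cfDen (pq ω) n : ℝ) ≤ q := by exact_mod_cast hq₀
  have hden : (1 : ℝ) ≤ cfDen (pq ω) n := by exact_mod_cast one_le_cfDen ha n
  have hden₁ : (cfDen (pq ω) (n + 1) : ℝ) + cfDen (pq ω) n ≤ K * q ^ 2 := by
    have hsucc : (cfDen (pq ω) (n + 1) : ℝ) ≤ (pq ω (n + 1) + 1) * cfDen (pq ω) n := by
      exact_mod_cast cfDen_succ_le ha n
    calc (cfDen (pq ω) (n + 1) : ℝ) + cfDen (pq ω) n ≤ (pq ω (n + 1) + 2) * cfDen (pq ω) n := by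
          linarith
      _ ≤ K * cfDen (pq ω) n * cfDen (pq ω) n := by gcongr; exact hK n
      _ ≤ K * q ^ 2 := by
          have hK₀ : 0 ≤ K := by
            have : (1 : ℝ) ≤ pq ω (n + 1) := by exact_mod_cast ha n
            nlinarith [hK n]
          rw [mul_assoc, sq]
          gcongr
  have hpos : (0 : ℝ) < cfDen (pq ω) (n + 1) + cfDen (pq ω) n := by
    have : (1 : ℝ) ≤ cfDen (pq ω) (n + 1) := by exact_mod_cast one_le_cfDen ha (n + 1)
    linarith
  calc 1 / K / (q : ℝ) ^ (2 : ℝ) = 1 / (K * q ^ 2) := by rw [Real.rpow_two, div_div]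
    _ ≤ 1 / (cfDen (pq ω) (n + 1) + cfDen (pq ω) n) := one_div_le_one_div_of_le hpos hden₁
    _ ≤ |cfErr ω n| := by rw [div_le_iff₀ hpos]; exact one_le_abs_cfErr_mul horb n
    _ ≤ |q * ω - p| := abs_cfErr_le horb hq₀ hq₁

theorem IsDiophantine.irrational {C τ ω : ℝ} (h : IsDiophantine C τ ω) (hC : 0 < C) :
    Irrational ω := by
  rintro ⟨r, rfl⟩
  have := h r.num r.den (by exact_mod_cast r.den_pos)
  rw [Int.cast_natCast, ← Rat.cast_natCast, ← Rat.cast_mul, Rat.den_mul_eq_num, Rat.cast_intCast,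
    sub_self, abs_zero] at this
  exact this.not_gt (div_pos hC (Real.rpow_pos_of_pos (by exact_mod_cast r.den_pos) τ))

lemma exists_exp_mul_lt_factorial (K : ℝ) (N : ℕ) :
    ∃ n, N ≤ n ∧ Real.exp (K * n) < n.factorial := by
  obtain ⟨n, hn, hnN⟩ := (((FloorSemiring.tendsto_pow_div_factorial_atTop
    (Real.exp K)).eventually_lt_const one_pos).and (Filter.eventually_ge_atTop N)).exists
  refine ⟨n, hnN, ?_⟩
  rwa [div_lt_one (by positivity), ← Real.exp_nat_mul, mul_comm] at hn

lemma Mprod_eq_factorial {ω : ℝ} (h : ∀ n, pq ω (n + 1) = (n + 1 : ℕ)) (n : ℕ) :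
    Mprod ω n = n.factorial := by
  rw [Mprod, ← Finset.Ico_add_one_right_eq_Icc, ← Finset.prod_Ico_id_eq_factorial, Nat.cast_prod]
  refine Finset.prod_congr rfl fun j hj => ?_
  obtain ⟨i, rfl⟩ := Nat.exists_eq_add_of_le' (Finset.mem_Ico.mp hj).1
  rw [h, Int.cast_natCast]

theorem exists_diophantine_non_KL :
    ∃ (ω C τ : ℝ), Irrational ω ∧ ω ∈ Ioo (0 : ℝ) 1 ∧ 0 < C ∧ 1 ≤ τ ∧
      IsDiophantine C τ ω ∧
      (∀ T : ℝ, 0 < T → ∀ N : ℕ, ∃ n : ℕ, N ≤ n ∧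
        Real.exp ((kappa + T) * n) < Mprod ω n) ∧
      (∀ T : ℝ, 0 < T → ∀ N : ℕ, ∃ n : ℕ, N ≤ n ∧
        Real.exp ((kappa' + T) * n) < Mprod' ω n) := by
  obtain ⟨ω, horb, hpq⟩ := exists_pq_eq (a := fun i => i + 1) fun i => Nat.le_add_left 1 i
  have hM := Mprod_eq_factorial hpq
  have hdioph : IsDiophantine (1 / 4) 2 ω := by
    refine isDiophantine_two_of_pq_le horb fun n => ?_
    have ha : ∀ n, 1 ≤ pq ω (n + 1) := fun n => one_le_pq_succ (horb n)
    have h₁ : (n : ℝ) ≤ cfDen (pq ω) n := by exact_mod_cast natCast_le_cfDen ha n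
    have h₂ : (1 : ℝ) ≤ cfDen (pq ω) n := by exact_mod_cast one_le_cfDen ha n
    rw [hpq]; push_cast
    linarith
  have hω : 0 ≤ ω := (horb 0).1.le
  refine ⟨ω, 1 / 4, 2, hdioph.irrational (by norm_num), horb 0, by norm_num, by norm_num, hdioph,
    fun T _ N => ?_, fun T _ N => ?_⟩
  · obtain ⟨n, hn, h⟩ := exists_exp_mul_lt_factorial (kappa + T) N
    exact ⟨n, hn, hM n ▸ h⟩
  · obtain ⟨n, hn, h⟩ := exists_exp_mul_lt_factorial (kappa' + T) N
    exact ⟨n, hn, h.trans_le (hM n ▸ Mprod_le_Mprod' hω n)⟩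
end
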